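/- arXiv:1501.05755 — 11 statements merged into one kernel-verified Lean document; each statement's English description precedes it below -/
import Mathlib

section
/- Let f : ℕ → ℕ be a function such that f(n) ≠ n for all n. Then there exists a 3-coloring χ : ℕ → {1,2,3} such that χ(n) ≠ χ(f(n)) for all n. -/
/-!
In the graph with edges `{n, f n}`, every finite vertex set `S` spans at most `#S` edges, so by
pigeonhole some `v ∈ S` has at most one preimage in `S`, hence at most two neighbours in `S`.
Removing `v`, colouring the rest and giving `v` a third colour 3-colours every finite piece; an
ultrafilter limit of these finite colourings colours all of `ℕ`.
-/

open Filter Finset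

theorem exists_forall_of_forall_finset {α β : Type*} [Finite β] (P : α → α → β → β → Prop)
    (h : ∀ S : Finset α, ∃ χ : α → β, ∀ x ∈ S, ∀ y ∈ S, P x y (χ x) (χ y)) :
    ∃ χ : α → β, ∀ x y, P x y (χ x) (χ y) := by
  classical
  choose χS hχS using h
  let U : Ultrafilter (Finset α) := Ultrafilter.of atTop
  have hlim : ∀ x, ∃ c, ∀ᶠ S in (U : Filter (Finset α)), χS S x = c := fun x => by
    obtain ⟨c, hc⟩ := (U.map fun S => χS S x).eq_pure_of_finite
    exact ⟨c, Ultrafilter.mem_map.mp (hc ▸ Ultrafilter.mem_pure.mpr rfl : {c} ∈ _)⟩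
  choose χ hχ using hlim
  refine ⟨χ, fun x y => ?_⟩
  have hbig : ∀ᶠ S in (U : Filter (Finset α)), {x, y} ⊆ S :=
    Ultrafilter.of_le _ (eventually_ge_atTop _)
  obtain ⟨S, hxS, hyS, hsub⟩ := ((hχ x).and ((hχ y).and hbig)).exists
  rw [← hxS, ← hyS]
  exact hχS S x (hsub (by simp)) y (hsub (by simp))

theorem exists_mem_card_fiber_le_one {α : Type*} [DecidableEq α] (f : α → α) {S : Finset α}
    (hS : S.Nonempty) : ∃ v ∈ S, #{m ∈ S | f m = v} ≤ 1 :=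
  exists_card_fiber_le_of_card_le_mul hS (mul_one _).ge

theorem exists_fin_three_coloring_on_finset {α : Type*} [DecidableEq α] (f : α → α)
    (hf : ∀ a, f a ≠ a) (S : Finset α) :
    ∃ χ : α → Fin 3, ∀ a ∈ S, f a ∈ S → χ a ≠ χ (f a) := by
  induction S using Finset.strongInduction with
  | _ S ih =>
  rcases S.eq_empty_or_nonempty with rfl | hS
  · exact ⟨fun _ => 0, by simp⟩
  obtain ⟨v, hvS, hfiber⟩ := exists_mem_card_fiber_le_one f hS
  obtain ⟨χ, hχ⟩ := ih (S.erase v) (erase_ssubset hvS)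
  obtain ⟨c, -, hc⟩ := exists_mem_notMem_of_card_lt_card (t := (univ : Finset (Fin 3)))
    (s := insert (χ (f v)) ({m ∈ S | f m = v}.image χ))
    (by grw [card_insert_le, card_image_le, hfiber]; simp)
  simp only [mem_insert, mem_image, mem_filter, not_or, not_exists, not_and] at hc
  refine ⟨Function.update χ v c, fun a haS hfaS => ?_⟩
  by_cases hav : a = v
  · subst hav
    simpa [Function.update_of_ne (hf a)] using hc.1
  by_cases hfav : f a = v
  · simpa [hav, hfav] using hc.2 a ⟨haS, hfav⟩
  simpa [hav, hfav] using hχ a (mem_erase.mpr ⟨hav, haS⟩) (mem_erase.mpr ⟨hfav, hfaS⟩)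

theorem stmt_0 (f : ℕ → ℕ) (hf : ∀ n, f n ≠ n) :
    ∃ χ : ℕ → Fin 3, ∀ n, χ n ≠ χ (f n) := by
  obtain ⟨χ, hχ⟩ := exists_forall_of_forall_finset (fun a b (c d : Fin 3) => b = f a → c ≠ d)
    fun S => (exists_fin_three_coloring_on_finset f hf S).imp
      fun χ hχ a ha b hb hab => hab ▸ hχ a ha (hab ▸ hb)
  exact ⟨χ, fun n => hχ n (f n) rfl⟩
end

section
/- For every finite set F ⊂ ℕ and every function f : ℕ → ℕ with f(n) ≠ n for all n, there exists χ : F → {1,2,3} such that χ(x) ≠ χ(f(x)) whenever both x ∈ F and f(x) ∈ F. -/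
/-!
Colour greedily, one vertex at a time. Since every `y ∈ F` has at most one image in `F`, the fibres
of `f` over `F` have average size at most one, so some `x ∈ F` is the image of at most one `y ∈ F`.
Thus `x` has at most two neighbours in the graph `y — f y` on `F` (namely `f x` and that `y`):
colour `F \ {x}` by induction and give `x` a third colour.
-/

open Finset Function

variable {α κ : Type*}

def IsColoringOn (f : α → α) (F : Finset α) (χ : α → κ) : Prop :=
  ∀ x ∈ F, f x ∈ F → χ x ≠ χ (f x)

lemma Finset.exists_card_filter_apply_eq_le_one [DecidableEq α] {F : Finset α} (hF : F.Nonempty)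
    (f : α → α) : ∃ x ∈ F, #{y ∈ F | f y = x} ≤ 1 :=
  exists_card_fiber_le_of_card_le_nsmul hF (by simp)

lemma IsColoringOn.update_of_erase [DecidableEq α] {f : α → α} {F : Finset α} {χ : α → κ}
    {x : α} {c : κ} (hχ : IsColoringOn f (F.erase x) χ) (hfx : f x ≠ x) (hc : c ≠ χ (f x))
    (hc' : ∀ y ∈ F, f y = x → c ≠ χ y) : IsColoringOn f F (update χ x c) := by
  intro y hy hfy
  obtain rfl | hyx := eq_or_ne y x
  · rwa [update_self, update_of_ne hfx]
  rw [update_of_ne hyx]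
  obtain hfyx | hfyx := eq_or_ne (f y) x
  · rw [hfyx, update_self]
    exact (hc' y hy hfyx).symm
  · rw [update_of_ne hfyx]
    exact hχ y (mem_erase.2 ⟨hyx, hy⟩) (mem_erase.2 ⟨hfyx, hfy⟩)

theorem exists_isColoringOn [DecidableEq α] [Fintype κ] [DecidableEq κ]
    (hκ : 3 ≤ Fintype.card κ) (f : α → α) (F : Finset α) (hf : ∀ x ∈ F, f x ≠ x) :
    ∃ χ : α → κ, IsColoringOn f F χ := by
  induction F using Finset.strongInduction with
  | _ F ih =>
  obtain rfl | hF := F.eq_empty_or_nonempty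
  · have : Nonempty κ := Fintype.card_pos_iff.1 (by omega)
    exact ⟨fun _ => Classical.arbitrary κ, fun x hx => absurd hx (notMem_empty x)⟩
  obtain ⟨x, hx, hdeg⟩ := exists_card_filter_apply_eq_le_one hF f
  obtain ⟨χ, hχ⟩ := ih (F.erase x) (erase_ssubset hx) fun y hy => hf y (mem_of_mem_erase hy)
  set used : Finset κ := insert (χ (f x)) ({y ∈ F | f y = x}.image χ)
  have hused : #used < #(univ : Finset κ) :=
    calc #used ≤ #({y ∈ F | f y = x}.image χ) + 1 := card_insert_le _ _
      _ ≤ 1 + 1 := by grw [card_image_le, hdeg]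
      _ < #univ := by rw [card_univ]; omega
  obtain ⟨c, -, hc⟩ := exists_mem_notMem_of_card_lt_card hused
  refine ⟨update χ x c, hχ.update_of_erase (hf x hx) ?_ ?_⟩
  · exact fun h => hc (h ▸ mem_insert_self _ _)
  · exact fun y hy hfy h => hc (h ▸ mem_insert_of_mem (mem_image_of_mem χ (by simp [hy, hfy])))

theorem stmt_1 (F : Finset ℕ) (f : ℕ → ℕ) (hf : ∀ n, f n ≠ n) :
    ∃ χ : {x // x ∈ F} → Fin 3,
      ∀ (x : ℕ) (hx : x ∈ F) (hfx : f x ∈ F), χ ⟨x, hx⟩ ≠ χ ⟨f x, hfx⟩ := by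
  obtain ⟨χ, hχ⟩ := exists_isColoringOn (κ := Fin 3) le_rfl f F fun x _ => hf x
  exact ⟨fun x => χ x, hχ⟩
end

section
/- Let f : ℕ → ℕ and let U be an ultrafilter on ℕ. If the pushforward f(U) equals U, then the set {n | f(n) = n} belongs to U. -/
/-!
If `f x ≠ x` on a set `s ∈ U`, colour the graph with edges `{x, f x}` by three colours (Katětov):
finite pieces have a vertex of degree at most two, so they can be coloured greedily, and the whole
graph follows by compactness. Some colour class `A` lies in `U`, and so does `s ∩ A ∩ f⁻¹(s ∩ A)`
since `f(U) = U`; but a point of that set would share its colour with its image.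
-/

open Finset

variable {α : Type*}

section FunctionalGraph

variable [DecidableEq α] (f : α → α)

/-- The summand is the degree of `v` in the graph with edges `{x, f x}`, `x ∈ E`; the degrees sum
to `2 * #E`, which is at most twice the number of vertices. -/
lemma exists_card_incident_le_two {E : Finset α} (hE : E.Nonempty) :
    ∃ v ∈ E ∪ E.image f, #{x ∈ E | f x = v} + #{x ∈ E | x = v} ≤ 2 := by
  have hmaps_f : (E : Set α).MapsTo f ↑(E ∪ E.image f) :=
    fun x hx => mem_union_right _ (mem_image_of_mem f hx)
  have hmaps_id : (E : Set α).MapsTo (fun x => x) ↑(E ∪ E.image f) :=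
    fun x hx => mem_union_left _ hx
  refine exists_le_of_sum_le (hE.mono subset_union_left) ?_
  rw [sum_add_distrib, ← card_eq_sum_card_fiberwise hmaps_f,
    ← card_eq_sum_card_fiberwise hmaps_id, sum_const, smul_eq_mul]
  have hcard := card_le_card (subset_union_left (s₁ := E) (s₂ := E.image f))
  omega

lemma exists_coloring_of_card_incident_le_two {E : Finset α} (hE : ∀ x ∈ E, f x ≠ x) {v : α}
    (hv : #{x ∈ E | f x = v} + #{x ∈ E | x = v} ≤ 2) {c : α → Fin 3}
    (hc : ∀ x ∈ E, x ≠ v → f x ≠ v → c (f x) ≠ c x) :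
    ∃ c' : α → Fin 3, ∀ x ∈ E, c' (f x) ≠ c' x := by
  -- the colours of the neighbours of `v`
  set B := {x ∈ E | f x = v}.image c ∪ {x ∈ E | x = v}.image (c ∘ f)
  have hB : #B < #(univ : Finset (Fin 3)) := calc
    #B ≤ #{x ∈ E | f x = v} + #{x ∈ E | x = v} :=
      (card_union_le _ _).trans (add_le_add card_image_le card_image_le)
    _ < 3 := by omega
  obtain ⟨i, -, hi⟩ := exists_mem_notMem_of_card_lt_card hB
  refine ⟨Function.update c v i, fun x hx => ?_⟩
  by_cases hxv : x = v
  · subst hxv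
    rw [Function.update_self, Function.update_of_ne (hE x hx)]
    rintro rfl
    exact hi (mem_union_right _ (mem_image_of_mem _ (mem_filter.2 ⟨hx, rfl⟩)))
  by_cases hfxv : f x = v
  · rw [hfxv, Function.update_self, Function.update_of_ne hxv]
    rintro rfl
    exact hi (mem_union_left _ (mem_image_of_mem _ (mem_filter.2 ⟨hx, hfxv⟩)))
  rw [Function.update_of_ne hfxv, Function.update_of_ne hxv]
  exact hc x hx hxv hfxv

lemma exists_coloring_finset (E : Finset α) (hE : ∀ x ∈ E, f x ≠ x) :
    ∃ c : α → Fin 3, ∀ x ∈ E, c (f x) ≠ c x := by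
  induction E using Finset.strongInduction with
  | H E ih =>
  obtain rfl | hne := E.eq_empty_or_nonempty
  · exact ⟨0, by simp⟩
  obtain ⟨v, hvE, hv⟩ := exists_card_incident_le_two f hne
  have hssub : {x ∈ E | x ≠ v ∧ f x ≠ v} ⊂ E := by
    rw [filter_ssubset]
    rcases mem_union.1 hvE with hvE | hvE
    · exact ⟨v, hvE, by simp⟩
    · obtain ⟨x, hx, rfl⟩ := mem_image.1 hvE
      exact ⟨x, hx, by simp⟩
  obtain ⟨c, hc⟩ := ih _ hssub fun x hx => hE x (mem_filter.1 hx).1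
  exact exists_coloring_of_card_incident_le_two f hE hv
    fun x hx hxv hfxv => hc x (mem_filter.2 ⟨hx, hxv, hfxv⟩)

end FunctionalGraph

theorem colorable_fromRel_apply_eq (f : α → α) :
    (SimpleGraph.fromRel fun x y => f x = y).Colorable 3 := by
  classical
  refine SimpleGraph.nonempty_hom_of_forall_finite_subgraph_hom fun G' hG' => ?_
  choose c hc using exists_coloring_finset f {x ∈ hG'.toFinset | f x ≠ x}
    fun x hx => (mem_filter.1 hx).2
  refine ⟨fun v => c v, ?_⟩
  rintro ⟨v, hv⟩ ⟨w, hw⟩ hvw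
  obtain ⟨hne, rfl | rfl⟩ := G'.adj_sub hvw
  · exact (hc v (mem_filter.2 ⟨hG'.mem_toFinset.2 hv, hne.symm⟩)).symm
  · exact hc w (mem_filter.2 ⟨hG'.mem_toFinset.2 hw, hne⟩)

theorem Ultrafilter.notMem_of_map_eq_self {β : Type*} [Finite β] {f : α → α}
    {U : Ultrafilter α} (hf : U.map f = U) {s : Set α} (c : α → β)
    (hc : ∀ x ∈ s, c (f x) ≠ c x) : s ∉ U := by
  intro hs
  obtain ⟨i, hi⟩ := (U.map c).eq_pure_of_finite
  have hA : s ∩ c ⁻¹' {i} ∈ U := Filter.inter_mem hs (mem_map.1 (hi ▸ rfl : {i} ∈ U.map c))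
  have hfA : f ⁻¹' (s ∩ c ⁻¹' {i}) ∈ U := mem_map.1 (hf.symm ▸ hA)
  obtain ⟨x, ⟨hxs, hxi⟩, -, hfxi⟩ := nonempty_of_mem (Filter.inter_mem hA hfA)
  exact hc x hxs (hfxi.trans hxi.symm)

theorem Ultrafilter.fixedPoints_mem_of_map_eq_self {f : α → α} {U : Ultrafilter α}
    (hf : U.map f = U) : Function.fixedPoints f ∈ U := by
  obtain ⟨c⟩ := colorable_fromRel_apply_eq f
  refine compl_notMem_iff.1 (notMem_of_map_eq_self hf c fun x hx => ?_)
  exact (c.valid ⟨Ne.symm hx, Or.inl rfl⟩).symm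

theorem stmt_2 (f : ℕ → ℕ) (U : Ultrafilter ℕ) (h : Ultrafilter.map f U = U) :
    {n | f n = n} ∈ U :=
  Ultrafilter.fixedPoints_mem_of_map_eq_self h
end

section
/- Let U and V be ultrafilters on ℕ. If there exist functions f, g : ℕ → ℕ with f(U) = V and g(V) = U, then there exists a bijection φ : ℕ → ℕ with φ(U) = V. -/
/-!
Since `g ∘ f` fixes `U`, Katětov's lemma gives a set `A ∈ U` on which `g ∘ f` is the identity:
otherwise a 3-coloring of the functional graph of `g ∘ f` (which exists by compactness, each
finite piece having a vertex of in-degree at most one) would have a color class in `U` that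
`g ∘ f` maps off itself. Thus `f` is injective on `A`. Shrinking `A` inside `U` so that both `A`
and `f '' A` have infinite complements, `f` restricted to `A` extends to a permutation of `ℕ`,
which agrees with `f` on a set of `U` and hence pushes `U` to `f(U) = V`.
-/

open Set Filter

namespace Ultrafilter

variable {α β : Type*}

theorem exists_eventually_eq_of_finite [Finite β] (U : Ultrafilter α) (c : α → β) :
    ∃ b, ∀ᶠ x in (U : Filter α), c x = b := by
  obtain ⟨b, hb⟩ := (map c U).eq_pure_of_finite
  exact ⟨b, show {b} ∈ map c U by rw [hb]; exact mem_singleton b⟩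

end Ultrafilter

/-- Rado's selection principle for finitely many colors. -/
theorem exists_forall_finset_exists_superset_eqOn {α β : Type*} [Finite β]
    (c : Finset α → α → β) :
    ∃ c' : α → β, ∀ T : Finset α, ∃ S, T ⊆ S ∧ ∀ x ∈ T, c' x = c S x := by
  let W : Ultrafilter (Finset α) := .of atTop
  choose c' hc' using fun x => W.exists_eventually_eq_of_finite (c · x)
  refine ⟨c', fun T => ?_⟩
  have hsup : ∀ᶠ S in (W : Filter (Finset α)), T ⊆ S := Ultrafilter.of_le _ (eventually_ge_atTop T)
  have hagree : ∀ᶠ S in (W : Filter (Finset α)), ∀ x ∈ T, c' x = c S x := by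
    simpa only [eq_comm] using (eventually_all_finset T).2 fun x _ => hc' x
  obtain ⟨S, hTS, hS⟩ := (hsup.and hagree).exists
  exact ⟨S, hTS, hS⟩

section ThreeColoring

variable {α : Type*} (h : α → α)

open Finset in
theorem exists_fin_three_coloring_on_finset_s3 (S : Finset α) :
    ∃ c : α → Fin 3, ∀ x ∈ S, h x ∈ S → h x ≠ x → c x ≠ c (h x) := by
  classical
  induction S using Finset.strongInduction with
  | _ S ih =>
  rcases S.eq_empty_or_nonempty with rfl | hS
  · exact ⟨fun _ => 0, by simp⟩
  -- Some `v ∈ S` has at most one `h`-preimage in `S`, so its neighbors use at most two colors.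
  obtain ⟨v, hv, hfiber⟩ : ∃ v ∈ S, #{x ∈ S | h x = v} ≤ 1 :=
    Finset.exists_card_fiber_le_of_card_le_mul hS (by rw [mul_one])
  obtain ⟨c, hc⟩ := ih (S.erase v) (Finset.erase_ssubset hv)
  let used : Finset (Fin 3) := insert (c (h v)) ({x ∈ S | h x = v}.image c)
  have hused : #used < #(Finset.univ : Finset (Fin 3)) :=
    calc #used ≤ #({x ∈ S | h x = v}.image c) + 1 := Finset.card_insert_le _ _
      _ ≤ #{x ∈ S | h x = v} + 1 := by gcongr; exact Finset.card_image_le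
      _ < 3 := by omega
  obtain ⟨i, -, hi⟩ := Finset.exists_mem_notMem_of_card_lt_card hused
  refine ⟨Function.update c v i, fun x hx hhx hne => ?_⟩
  by_cases hxv : x = v
  · subst hxv
    rw [Function.update_self, Function.update_of_ne hne]
    exact fun h' => hi (h' ▸ Finset.mem_insert_self _ _)
  by_cases hhxv : h x = v
  · rw [Function.update_of_ne hxv, hhxv, Function.update_self]
    exact fun h' => hi (h' ▸ Finset.mem_insert_of_mem
      (Finset.mem_image_of_mem c (Finset.mem_filter.2 ⟨hx, hhxv⟩)))
  rw [Function.update_of_ne hxv, Function.update_of_ne hhxv]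
  exact hc x (Finset.mem_erase.2 ⟨hxv, hx⟩) (Finset.mem_erase.2 ⟨hhxv, hhx⟩) hne

theorem exists_fin_three_coloring : ∃ c : α → Fin 3, ∀ x, h x ≠ x → c x ≠ c (h x) := by
  classical
  choose c hc using exists_fin_three_coloring_on_finset_s3 h
  obtain ⟨c', hc'⟩ := exists_forall_finset_exists_superset_eqOn c
  refine ⟨c', fun x hx => ?_⟩
  obtain ⟨S, hS, hagree⟩ := hc' {x, h x}
  rw [hagree x (by simp), hagree (h x) (by simp)]
  exact hc S x (hS (by simp)) (hS (by simp)) hx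

end ThreeColoring

/-- Katětov's lemma. -/
theorem Ultrafilter.eventually_apply_eq_self_of_map_eq {α : Type*} {U : Ultrafilter α}
    {h : α → α} (hU : U.map h = U) : ∀ᶠ x in (U : Filter α), h x = x := by
  obtain ⟨c, hc⟩ := exists_fin_three_coloring h
  obtain ⟨i, hi⟩ := U.exists_eventually_eq_of_finite c
  have hi' : ∀ᶠ x in (U : Filter α), c (h x) = i := by
    rw [← hU] at hi
    exact hi
  filter_upwards [hi, hi'] with x hx hhx
  by_contra hne
  exact hc x hne (hx.trans hhx.symm)

theorem Set.Infinite.exists_union_eq_disjoint_infinite {α : Type*} {s : Set α}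
    (hs : s.Infinite) : ∃ t u : Set α, t ∪ u = s ∧ Disjoint t u ∧ t.Infinite ∧ u.Infinite := by
  obtain ⟨t, u, hunion, hdisj, hcard⟩ := hs.exists_union_disjoint_cardinal_eq_of_infinite
  have hfin : t.Finite ↔ u.Finite := by
    rw [← Cardinal.lt_aleph0_iff_set_finite, ← Cardinal.lt_aleph0_iff_set_finite, hcard]
  refine ⟨t, u, hunion, hdisj, fun ht => hs ?_, fun hu => hs ?_⟩
  · rw [← hunion]; exact ht.union (hfin.1 ht)
  · rw [← hunion]; exact (hfin.2 hu).union hu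

theorem Ultrafilter.exists_mem_subset_infinite_compl_image {α β : Type*} [Infinite α]
    [Infinite β] (U : Ultrafilter α) {f : α → β} {A : Set α} (hA : A ∈ U) (hf : InjOn f A) :
    ∃ s ∈ U, s ⊆ A ∧ sᶜ.Infinite ∧ (f '' s)ᶜ.Infinite := by
  rcases A.finite_or_infinite with hfin | hinf
  · obtain ⟨a, ha, rfl⟩ := U.eq_pure_of_finite_mem hfin hA
    exact ⟨{a}, by simp, singleton_subset_iff.2 ha, (finite_singleton a).infinite_compl,
      by simpa using (finite_singleton (f a)).infinite_compl⟩
  obtain ⟨t, u, hunion, hdisj, hti, hui⟩ := hinf.exists_union_eq_disjoint_infinite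
  -- Keep the half lying in `U`; the other half and its image witness the two complements.
  have key : ∀ t u, t ∪ u = A → Disjoint t u → u.Infinite → t ∈ U →
      ∃ s ∈ U, s ⊆ A ∧ sᶜ.Infinite ∧ (f '' s)ᶜ.Infinite := by
    intro t u hunion hdisj hui htU
    have ht : t ⊆ A := hunion ▸ subset_union_left
    have hu : u ⊆ A := hunion ▸ subset_union_right
    refine ⟨t, htU, ht, hui.mono (subset_compl_iff_disjoint_left.2 hdisj),
      ((hui.image (hf.mono hu)).mono (subset_compl_iff_disjoint_left.2 ?_))⟩
    rw [disjoint_iff_inter_eq_empty, ← hf.image_inter ht hu, hdisj.inter_eq, image_empty]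
  rcases U.union_mem_iff.1 (hunion ▸ hA : t ∪ u ∈ U) with htU | huU
  · exact key t u hunion hdisj hui htU
  · exact key u t (union_comm t u ▸ hunion) hdisj.symm hti huU

theorem Set.InjOn.exists_perm_eqOn {α : Type*} [Countable α] {f : α → α} {s : Set α}
    (hf : InjOn f s) (hs : sᶜ.Infinite) (hfs : (f '' s)ᶜ.Infinite) :
    ∃ φ : Equiv.Perm α, EqOn φ f s := by
  have := hs.to_subtype
  have := hfs.to_subtype
  have hcompl : Nonempty (↥sᶜ ≃ ↥(range (s.domRestrict f))ᶜ) := by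
    rw [range_domRestrict, ← Cardinal.eq, Cardinal.mk_eq_aleph0, Cardinal.mk_eq_aleph0]
  obtain ⟨φ, hφ⟩ := Cardinal.extend_function ⟨_, hf.injective⟩ hcompl
  exact ⟨φ, fun x hx => hφ ⟨x, hx⟩⟩

theorem stmt_3 (U V : Ultrafilter ℕ) (f g : ℕ → ℕ)
    (hf : Ultrafilter.map f U = V) (hg : Ultrafilter.map g V = U) :
    ∃ φ : Equiv.Perm ℕ, Ultrafilter.map φ U = V := by
  have hgf : U.map (g ∘ f) = U := by rw [← Ultrafilter.map_map, hf, hg]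
  have hA : {x | g (f x) = x} ∈ U := Ultrafilter.eventually_apply_eq_self_of_map_eq hgf
  have hinj : InjOn f {x | g (f x) = x} := LeftInvOn.injOn fun _ hx => hx
  obtain ⟨s, hsU, hsA, hs, hfs⟩ := U.exists_mem_subset_infinite_compl_image hA hinj
  obtain ⟨φ, hφ⟩ := (hinj.mono hsA).exists_perm_eqOn hs hfs
  refine ⟨φ, Ultrafilter.coe_injective ?_⟩
  rw [← hf, Ultrafilter.coe_map, Ultrafilter.coe_map]
  exact map_congr (eventuallyEq_of_mem hsU hφ)
end

section
/- The Rudin–Keisler preorder on ultrafilters on ℕ satisfies antisymmetry up to isomorphism: U ≤_RK V and V ≤_RK U hold if and only if there is a bijection φ : ℕ → ℕ with φ(U) = V. -/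
/-!
If `f(V) = U` and `g(U) = V`, then `U` is fixed by `f ∘ g`, and a self-map fixing an ultrafilter
is the identity on a set of that ultrafilter; so `g` is injective on a set in `U`, which can be
shrunk until both it and its image are co-infinite, and then `g` extends to a permutation.

An `h`-invariant ultrafilter `V` contains no set `S` that every orbit eventually leaves: `h` would
flip the parity of the exit time from `S` on `S ∩ h⁻¹ S ∈ V`. The non-fixed points of
`h : ℕ → ℕ` are covered by three such sets: `{n | h n < n}`, and the points with `n < h n`
split by the parity of a block index, the blocks being consecutive intervals of `ℕ` chosen so
that `h` moves every point at most one block up.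
-/

open Function Set

noncomputable def exitTime {α : Type*} (h : α → α) (S : Set α) (x : α) : ℕ :=
  sInf {k | h^[k] x ∉ S}

theorem exitTime_eq_exitTime_apply_add_one {α : Type*} {h : α → α} {S : Set α} {x : α}
    (hx : x ∈ S) (hexit : ∃ k, h^[k] x ∉ S) : exitTime h S x = exitTime h S (h x) + 1 := by
  have hpos : 1 ≤ exitTime h S x := by
    refine Nat.one_le_iff_ne_zero.2 fun h0 => ?_
    rcases Nat.sInf_eq_zero.1 h0 with h0 | h0
    · exact h0 hx
    · exact (eq_empty_iff_forall_notMem.1 h0) _ hexit.choose_spec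
  simpa only [exitTime, iterate_succ_apply] using (Nat.sInf_add hpos).symm

namespace Ultrafilter

variable {α : Type*} {h : α → α} {V : Ultrafilter α}

theorem symmDiff_preimage_notMem (hV : map h V = V) (P : Set α) :
    symmDiff P (h ⁻¹' P) ∉ V := by
  have hP : h ⁻¹' P ∈ V ↔ P ∈ V := by rw [← mem_map, hV]
  rw [Set.symmDiff_def, union_mem_iff, Set.sdiff_eq, Set.sdiff_eq, ← mem_coe, ← mem_coe,
    Filter.inter_mem_iff, Filter.inter_mem_iff]
  simp only [mem_coe, compl_mem_iff_notMem, hP]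
  tauto

theorem notMem_of_forall_exists_iterate_notMem (hV : map h V = V) {S : Set α}
    (hS : ∀ x ∈ S, ∃ k, h^[k] x ∉ S) : S ∉ V := by
  intro hSV
  have hSV' : h ⁻¹' S ∈ V := by rwa [← mem_map, hV]
  refine symmDiff_preimage_notMem hV {x | Even (exitTime h S x)}
    (V.mem_of_superset (Filter.inter_mem hSV hSV') fun x ⟨hx, _⟩ => ?_)
  have hstep := exitTime_eq_exitTime_apply_add_one hx (hS x hx)
  simp only [mem_symmDiff, mem_ofPred_eq, mem_preimage, hstep, Nat.even_add_one]
  tauto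

end Ultrafilter

theorem exists_iterate_notMem_of_forall_apply_lt {h : ℕ → ℕ} {S : Set ℕ}
    (hS : ∀ n ∈ S, h n < n) : ∀ n ∈ S, ∃ k, h^[k] n ∉ S := by
  intro n _
  by_contra! hstay
  have hdecr : ∀ k, h^[k] n + k ≤ n := by
    intro k
    induction k with
    | zero => simp
    | succ k ih =>
      have := hS _ (hstay k)
      rw [iterate_succ_apply']
      omega
  have := hdecr (n + 1)
  omega

def blockBound (h : ℕ → ℕ) : ℕ → ℕ
  | 0 => 0
  | k + 1 => (Finset.range (blockBound h k + 1)).sup h + blockBound h k + 1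

theorem apply_lt_blockBound_succ (h : ℕ → ℕ) {k m : ℕ} (hm : m ≤ blockBound h k) :
    h m < blockBound h (k + 1) := by
  have : h m ≤ (Finset.range (blockBound h k + 1)).sup h :=
    Finset.le_sup (Finset.mem_range.2 (Nat.lt_succ_of_le hm))
  simp only [blockBound]
  omega

theorem strictMono_blockBound (h : ℕ → ℕ) : StrictMono (blockBound h) :=
  strictMono_nat_of_lt_succ fun k => by simp only [blockBound]; omega

theorem exists_lt_blockBound (h : ℕ → ℕ) (n : ℕ) : ∃ k, n < blockBound h k :=
  ⟨n + 1, (Nat.lt_succ_self n).trans_le (strictMono_blockBound h).le_apply⟩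

noncomputable def block (h : ℕ → ℕ) (n : ℕ) : ℕ :=
  Nat.find (exists_lt_blockBound h n)

theorem lt_blockBound_block (h : ℕ → ℕ) (n : ℕ) : n < blockBound h (block h n) :=
  Nat.find_spec (exists_lt_blockBound h n)

theorem block_mono (h : ℕ → ℕ) : Monotone (block h) := fun _ _ hmn =>
  Nat.find_min' _ (hmn.trans_lt (lt_blockBound_block h _))

theorem block_apply_le (h : ℕ → ℕ) (n : ℕ) : block h (h n) ≤ block h n + 1 :=
  Nat.find_min' _ (apply_lt_blockBound_succ h (lt_blockBound_block h n).le)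

theorem exists_iterate_notMem_of_lt_apply_of_block_mod_two {h : ℕ → ℕ} (i : ℕ) :
    ∀ n ∈ {n | n < h n ∧ block h n % 2 = i},
      ∃ k, h^[k] n ∉ {n | n < h n ∧ block h n % 2 = i} := by
  intro n _
  by_contra! hstay
  have hincr : ∀ k, n + k ≤ h^[k] n ∧ block h (h^[k] n) = block h n := by
    intro k
    induction k with
    | zero => simp
    | succ k ih =>
      obtain ⟨hlt, hpar⟩ := hstay k
      obtain ⟨-, hpar'⟩ := hstay (k + 1)
      rw [iterate_succ_apply'] at hpar' ⊢
      have := block_mono h hlt.le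
      have := block_apply_le h (h^[k] n)
      omega
  obtain ⟨hle, hblock⟩ := hincr (blockBound h (block h n))
  have := lt_blockBound_block h (h^[blockBound h (block h n)] n)
  rw [hblock] at this
  omega

theorem exists_perm_eqOn_of_injOn {g : ℕ → ℕ} {s : Set ℕ} (hg : InjOn g s)
    (hs : sᶜ.Infinite) (hgs : (g '' s)ᶜ.Infinite) : ∃ φ : Equiv.Perm ℕ, EqOn φ g s := by
  have := hs.to_subtype
  have := hgs.to_subtype
  have hcompl : Nonempty (↥sᶜ ≃ ↥(range (s.domRestrict g))ᶜ) := by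
    rw [range_domRestrict, ← Cardinal.eq, Cardinal.mk_eq_aleph0, Cardinal.mk_eq_aleph0]
  obtain ⟨φ, hφ⟩ := Cardinal.extend_function ⟨s.domRestrict g, hg.injective⟩ hcompl
  exact ⟨φ, fun x hx => hφ ⟨x, hx⟩⟩

namespace Ultrafilter

theorem fixedPoints_mem_of_map_eq {h : ℕ → ℕ} {V : Ultrafilter ℕ} (hV : map h V = V) :
    fixedPoints h ∈ V := by
  have hcover : (fixedPoints h)ᶜ ⊆ {n | h n < n} ∪
      ({n | n < h n ∧ block h n % 2 = 0} ∪ {n | n < h n ∧ block h n % 2 = 1}) := by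
    intro n hn
    simp only [mem_compl_iff, mem_fixedPoints, IsFixedPt] at hn
    simp only [mem_union, mem_ofPred_eq]
    omega
  rw [← compl_mem_iff_notMem.not_left]
  intro hmem
  rcases union_mem_iff.1 (V.mem_of_superset hmem hcover) with hlt | hgt
  · exact notMem_of_forall_exists_iterate_notMem hV
      (exists_iterate_notMem_of_forall_apply_lt fun _ hn => hn) hlt
  · rcases union_mem_iff.1 hgt with hi | hi <;>
      exact notMem_of_forall_exists_iterate_notMem hV
        (exists_iterate_notMem_of_lt_apply_of_block_mod_two _) hi

theorem exists_mem_infinite_compl (U : Ultrafilter ℕ) : ∃ s ∈ U, sᶜ.Infinite := by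
  have hodd : {n : ℕ | Odd n}.Infinite := Nat.frequently_atTop_iff_infinite.1
    (Filter.frequently_atTop.2 fun n => ⟨2 * n + 1, by omega, odd_two_mul_add_one n⟩)
  have heven : {n : ℕ | Even n}.Infinite := Nat.frequently_atTop_iff_infinite.1
    (Filter.frequently_atTop.2 fun n => ⟨2 * n, by omega, even_two_mul n⟩)
  rcases U.mem_or_compl_mem {n | Even n} with h | h
  · exact ⟨_, h, by simpa only [compl_ofPred, Nat.not_even_iff_odd] using hodd⟩
  · exact ⟨_, h, by rwa [compl_compl]⟩

theorem map_eq_map_of_eqOn {α β : Type*} {U : Ultrafilter α} {f g : α → β} {s : Set α}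
    (hs : s ∈ U) (hfg : EqOn f g s) : map f U = map g U :=
  coe_injective <| by
    simpa only [coe_map] using Filter.map_congr (Filter.eventuallyEq_of_mem hs hfg)

theorem exists_perm_map_eq_of_injOn {U V : Ultrafilter ℕ} {g : ℕ → ℕ} {s : Set ℕ}
    (hgUV : map g U = V) (hs : s ∈ U) (hg : InjOn g s) : ∃ φ : Equiv.Perm ℕ, map φ U = V := by
  obtain ⟨t, htU, ht⟩ := U.exists_mem_infinite_compl
  obtain ⟨t', ht'V, ht'⟩ := V.exists_mem_infinite_compl
  have ht'U : g ⁻¹' t' ∈ U := by rwa [← mem_map, hgUV]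
  set s' := s ∩ t ∩ g ⁻¹' t'
  have hs'U : s' ∈ U := Filter.inter_mem (Filter.inter_mem hs htU) ht'U
  obtain ⟨φ, hφ⟩ := exists_perm_eqOn_of_injOn (s := s') (hg.mono fun x hx => hx.1.1)
    (ht.mono (compl_subset_compl.2 fun x hx => hx.1.2))
    (ht'.mono (compl_subset_compl.2 (image_subset_iff.2 fun x hx => hx.2)))
  exact ⟨φ, (map_eq_map_of_eqOn hs'U hφ).trans hgUV⟩

end Ultrafilter

theorem stmt_5 (U V : Ultrafilter ℕ) :
    ((∃ f : ℕ → ℕ, Ultrafilter.map f V = U) ∧ (∃ g : ℕ → ℕ, Ultrafilter.map g U = V)) ↔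
      ∃ φ : Equiv.Perm ℕ, Ultrafilter.map φ U = V := by
  constructor
  · rintro ⟨⟨f, hf⟩, g, hg⟩
    have hfg : Ultrafilter.map (f ∘ g) U = U := by rw [← Ultrafilter.map_map, hg, hf]
    exact Ultrafilter.exists_perm_map_eq_of_injOn hg (Ultrafilter.fixedPoints_mem_of_map_eq hfg)
      (LeftInvOn.injOn (f₁' := f) fun _ hx => hx)
  · rintro ⟨φ, hφ⟩
    refine ⟨⟨φ.symm, ?_⟩, φ, hφ⟩
    rw [← hφ, Ultrafilter.map_map, Equiv.symm_comp_self, Ultrafilter.map_id]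
end

section
/- If U is a nonprincipal ultrafilter on ℕ, then the tensor product U ⊗ U is not Rudin–Keisler below U; in particular, U ⊗ U is not isomorphic to U. -/
/-!
A map `F : ℕ → ℕ × ℕ` with `F_* U = U ⊗ U` has coordinates `f = fst ∘ F` and `g = snd ∘ F` with
`f_* U = U` and `g_* U = U`. By Katětov's lemma a self-map of `ℕ` fixing an ultrafilter is the
identity on a set in the ultrafilter, so `F n = (n, n)` for `U`-almost all `n` and the diagonal
would belong to `U ⊗ U`; but its sections are singletons, which a nonprincipal `U` does not contain.

Katětov's lemma is proved by a colouring of `ℕ` with finitely many colours such that `n` and `f n`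
get different colours whenever `f n ≠ n`: an ultrafilter fixed by `f` concentrates on one colour
class, and so does its pullback along `f`.
-/

/-- The tensor product of two ultrafilters on ℕ:
`X ∈ U ⊗ V ↔ {n | {m | (n, m) ∈ X} ∈ V} ∈ U`. -/
def tensor (U V : Ultrafilter ℕ) : Ultrafilter (ℕ × ℕ) :=
  U.bind (fun n => V.map (fun m => (n, m)))

section DescentRank

variable {α : Type*} {r : α → α → Prop}

noncomputable def descentRank (hr : WellFounded r) (f : α → α) : α → ℕ :=
  open Classical in
  hr.fix fun n rank => if h : r (f n) n then rank (f n) h + 1 else 0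

theorem descentRank_of_rel (hr : WellFounded r) (f : α → α) {n : α} (h : r (f n) n) :
    descentRank hr f n = descentRank hr f (f n) + 1 := by
  rw [descentRank, hr.fix_eq, dif_pos h]

theorem bodd_descentRank_ne_of_rel (hr : WellFounded r) (f : α → α) {n : α} (h : r (f n) n) :
    (descentRank hr f (f n)).bodd ≠ (descentRank hr f n).bodd := by
  rw [descentRank_of_rel hr f h, Nat.bodd_succ]
  exact (Bool.not_ne_self _).symm

end DescentRank

section Blocks

variable (f : ℕ → ℕ)

/-- The blocks `[blockStart f k, blockStart f (k + 1))` partition `ℕ`, and `f` maps the block `k`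
into the blocks `≤ k + 1`. -/
def blockStart : ℕ → ℕ
  | 0 => 0
  | k + 1 => blockStart k + (Finset.range (blockStart k + 1)).sup f + 1

theorem blockStart_strictMono : StrictMono (blockStart f) :=
  strictMono_nat_of_lt_succ fun k => by rw [blockStart]; omega

theorem apply_lt_blockStart_succ {n k : ℕ} (h : n ≤ blockStart f k) :
    f n < blockStart f (k + 1) := by
  have : f n ≤ (Finset.range (blockStart f k + 1)).sup f :=
    Finset.le_sup (Finset.mem_range_succ_iff.2 h)
  rw [blockStart]
  omega

noncomputable def blockIndex (n : ℕ) : ℕ :=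
  Nat.findGreatest (fun k => blockStart f k ≤ n) n

theorem blockStart_blockIndex_le (n : ℕ) : blockStart f (blockIndex f n) ≤ n :=
  Nat.findGreatest_spec (P := fun k => blockStart f k ≤ n) (Nat.zero_le n) (by simp [blockStart])

theorem lt_blockStart_blockIndex_succ (n : ℕ) : n < blockStart f (blockIndex f n + 1) := by
  by_contra! h
  have hle : blockIndex f n + 1 ≤ n := ((blockStart_strictMono f).id_le _).trans h
  exact Nat.findGreatest_is_greatest (Nat.lt_succ_self _) hle h

theorem blockIndex_mono : Monotone (blockIndex f) := fun n _ h =>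
  Nat.le_findGreatest ((Nat.findGreatest_le n).trans h) ((blockStart_blockIndex_le f n).trans h)

theorem blockIndex_apply_le (n : ℕ) : blockIndex f (f n) ≤ blockIndex f n + 1 := by
  have hfn : f n < blockStart f (blockIndex f n + 2) :=
    apply_lt_blockStart_succ f (lt_blockStart_blockIndex_succ f n).le
  by_contra! h
  have := (blockStart_strictMono f).monotone (show blockIndex f n + 2 ≤ blockIndex f (f n) by omega)
  have := blockStart_blockIndex_le f (f n)
  omega

theorem wellFounded_sameBlock_gt :
    WellFounded fun m n => n < m ∧ blockIndex f m = blockIndex f n :=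
  Subrelation.wf
    (r := InvImage (· < ·) fun n => blockStart f (blockIndex f n + 1) - n)
    (fun {_ n} h => by
      have := lt_blockStart_blockIndex_succ f n
      simp only [InvImage, h.2]
      omega)
    (InvImage.wf _ wellFounded_lt)

end Blocks

/-- The first colour records descents of `f`; an ascent either moves to the next block
(second colour) or stays in its block (third colour). -/
noncomputable def fixedPointColoring (f : ℕ → ℕ) (n : ℕ) : Bool × Bool × Bool :=
  ((descentRank wellFounded_lt f n).bodd, (blockIndex f n).bodd,
    (descentRank (wellFounded_sameBlock_gt f) f n).bodd)

theorem fixedPointColoring_apply_ne {f : ℕ → ℕ} {n : ℕ} (h : f n ≠ n) :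
    fixedPointColoring f (f n) ≠ fixedPointColoring f n := by
  intro he
  rcases h.lt_or_gt with hdesc | hgt
  · exact bodd_descentRank_ne_of_rel wellFounded_lt f hdesc (congrArg Prod.fst he)
  have hmono := blockIndex_mono f hgt.le
  rcases (blockIndex_apply_le f n).eq_or_lt with hsucc | hlt
  · have := congrArg (·.2.1) he
    simp [fixedPointColoring, hsucc, Nat.bodd_succ] at this
  · exact bodd_descentRank_ne_of_rel (wellFounded_sameBlock_gt f) f ⟨hgt, by omega⟩
      (congrArg (·.2.2) he)

namespace Ultrafilter

theorem eventually_comp_apply_eq_of_map_eq_self {α β : Type*} [Finite β] {U : Ultrafilter α}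
    {f : α → α} (hf : U.map f = U) (c : α → β) : ∀ᶠ n in U, c (f n) = c n := by
  obtain ⟨b, hb⟩ := (U.map c).eq_pure_of_finite
  have hcb : {b} ∈ U.map c := hb ▸ mem_pure.2 rfl
  have hc : ∀ᶠ n in U, c n = b := mem_map.1 hcb
  have hcf : ∀ᶠ n in U, c (f n) = b := by
    rw [← hf, map_map] at hcb
    exact mem_map.1 hcb
  filter_upwards [hc, hcf] with n h h'
  rw [h, h']

theorem eventually_apply_eq_of_map_eq_self {U : Ultrafilter ℕ} {f : ℕ → ℕ} (hf : U.map f = U) :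
    ∀ᶠ n in U, f n = n := by
  filter_upwards [U.eventually_comp_apply_eq_of_map_eq_self hf (fixedPointColoring f)] with n hn
  by_contra h
  exact fixedPointColoring_apply_ne h hn

end Ultrafilter

section Tensor

theorem mem_tensor {U V : Ultrafilter ℕ} {X : Set (ℕ × ℕ)} :
    X ∈ tensor U V ↔ {n | {m | (n, m) ∈ X} ∈ V} ∈ U := by
  change X ∈ Filter.bind (U : Filter ℕ) (fun n => Filter.map (fun m => (n, m)) (V : Filter ℕ)) ↔ _
  rw [Filter.mem_bind']
  rfl

theorem map_fst_tensor (U V : Ultrafilter ℕ) : (tensor U V).map Prod.fst = U := by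
  ext S
  have hsection (n : ℕ) : {_m : ℕ | n ∈ S} ∈ V ↔ n ∈ S := by
    by_cases h : n ∈ S <;> simp [h, ← Ultrafilter.mem_coe]
  simp [Ultrafilter.mem_map, mem_tensor, hsection]

theorem map_snd_tensor (U V : Ultrafilter ℕ) : (tensor U V).map Prod.snd = V := by
  ext S
  rw [Ultrafilter.mem_map, mem_tensor]
  by_cases hS : S ∈ V <;> simp [Set.preimage, hS, ← Ultrafilter.mem_coe]

theorem diagonal_notMem_tensor {U : Ultrafilter ℕ} (hU : ∀ n, U ≠ pure n) :
    {p : ℕ × ℕ | p.1 = p.2} ∉ tensor U U := by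
  have hsections : {n | {m | (n, m) ∈ {p : ℕ × ℕ | p.1 = p.2}} ∈ U} = ∅ := by
    refine Set.eq_empty_of_forall_notMem fun n hn => ?_
    obtain ⟨x, rfl, hx⟩ := U.eq_pure_of_finite_mem (Set.finite_singleton n) <| by
      simpa [eq_comm] using hn
    exact hU x hx
  rw [mem_tensor, hsections]
  exact U.empty_notMem

end Tensor

theorem stmt_10 (U : Ultrafilter ℕ) (hU : ∀ n, U ≠ pure n) :
    (¬ ∃ F : ℕ → ℕ × ℕ, Ultrafilter.map F U = tensor U U) ∧
    (¬ ∃ φ : ℕ ≃ ℕ × ℕ, Ultrafilter.map φ U = tensor U U) := by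
  have not_rk_le : ¬ ∃ F : ℕ → ℕ × ℕ, Ultrafilter.map F U = tensor U U := by
    rintro ⟨F, hF⟩
    have hfst : U.map (Prod.fst ∘ F) = U := by rw [← Ultrafilter.map_map, hF, map_fst_tensor]
    have hsnd : U.map (Prod.snd ∘ F) = U := by rw [← Ultrafilter.map_map, hF, map_snd_tensor]
    apply diagonal_notMem_tensor hU
    rw [← hF, Ultrafilter.mem_map]
    filter_upwards [Ultrafilter.eventually_apply_eq_of_map_eq_self hfst,
      Ultrafilter.eventually_apply_eq_of_map_eq_self hsnd] with n h₁ h₂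
    exact h₁.trans h₂.symm
  exact ⟨not_rk_le, fun ⟨φ, hφ⟩ => not_rk_le ⟨φ, hφ⟩⟩
end

section
/- For A, B ⊆ ℕ, the following are equivalent: (1) for every finite interval I ⊂ ℕ there exists x with x + (A ∩ I) = B ∩ (x + I) (A is exactly embedded in B); (2) there exists an ultrafilter U on ℕ such that A = B - U. -/
/-- The leftward shift `A - n = {m | m + n ∈ A}`. -/
def lshift (A : Set ℕ) (n : ℕ) : Set ℕ := {m | m + n ∈ A}

/-- The ultrafilter-shift `A - U = {n | A - n ∈ U}`. -/
def ushift (A : Set ℕ) (U : Ultrafilter ℕ) : Set ℕ := {n | lshift A n ∈ U}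

/-!
Embedding `A ∩ I` into `B` at `x` says exactly that `x ∈ B - n ↔ n ∈ A` for every `n ∈ I`.
Given `U`, an ultrafilter contains, for each of the finitely many `n ∈ I`, either `B - n` or its
complement, so a point `x` of the intersection embeds `(B - U) ∩ I`. Conversely, if `x b` embeds
`A ∩ [0, b]`, then for a fixed `n` the embedding condition at `n` holds for all large `b`, so
pushing any free ultrafilter forward along `b ↦ x b` gives `U` with `A = B - U`.
-/

open Filter Function

theorem Set.image_inter_eq_inter_image_iff {α β : Type*} {f : α → β} (hf : Injective f)
    {A I : Set α} {B : Set β} : f '' (A ∩ I) = B ∩ f '' I ↔ ∀ n ∈ I, (n ∈ A ↔ f n ∈ B) := by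
  rw [Set.inter_comm B, ← Set.image_inter_preimage, (Set.image_injective.2 hf).eq_iff,
    Set.ext_iff]
  simp only [Set.mem_inter_iff, Set.mem_preimage]
  exact forall_congr' fun n => by tauto

theorem Ultrafilter.eventually_mem_iff_mem {α : Type*} (U : Ultrafilter α) (s : Set α) :
    ∀ᶠ x in U, x ∈ s ↔ s ∈ U := by
  by_cases hs : s ∈ U
  · exact Filter.mem_of_superset hs fun x hx => iff_of_true hx hs
  · exact Filter.mem_of_superset (U.compl_mem_iff_notMem.2 hs) fun x hx => iff_of_false hx hs

theorem Ultrafilter.eventually_forall_mem_iff_mem {α ι : Type*} (U : Ultrafilter α)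
    (S : ι → Set α) {F : Set ι} (hF : F.Finite) : ∀ᶠ x in U, ∀ i ∈ F, (x ∈ S i ↔ S i ∈ U) :=
  (eventually_all_finite hF).2 fun i _ => U.eventually_mem_iff_mem (S i)

theorem eq_ushift_map_of_forall_le {A B : Set ℕ} {x : ℕ → ℕ}
    (hx : ∀ b, ∀ n ≤ b, (n ∈ A ↔ x b + n ∈ B)) {U : Ultrafilter ℕ} (hU : (U : Filter ℕ) ≤ atTop) :
    A = ushift B (U.map x) := by
  ext n
  have hlarge : ∀ᶠ b in U, (n ∈ A ↔ x b + n ∈ B) :=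
    ((eventually_ge_atTop n).filter_mono hU).mono fun b hb => hx b n hb
  exact eventually_const.symm.trans (eventually_congr hlarge)

theorem exists_forall_mem_ushift_iff_add_mem (B : Set ℕ) (U : Ultrafilter ℕ) (I : Set ℕ)
    (hI : I.Finite) : ∃ x, ∀ n ∈ I, (n ∈ ushift B U ↔ x + n ∈ B) := by
  obtain ⟨x, hx⟩ := (U.eventually_forall_mem_iff_mem (lshift B) hI).exists
  exact ⟨x, fun n hn => (hx n hn).symm⟩

theorem stmt_13 (A B : Set ℕ) :
    (∀ a b : ℕ, ∃ x : ℕ,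
        (fun s => x + s) '' (A ∩ Set.Icc a b) = B ∩ ((fun s => x + s) '' Set.Icc a b)) ↔
      ∃ U : Ultrafilter ℕ, A = ushift B U := by
  simp only [Set.image_inter_eq_inter_image_iff (add_right_injective _)]
  constructor
  · intro h
    choose x hx using fun b => h 0 b
    exact ⟨_, eq_ushift_map_of_forall_le (fun b n hn => hx b n ⟨n.zero_le, hn⟩)
      Nat.hyperfilter_le_atTop⟩
  · rintro ⟨U, rfl⟩ a b
    exact exists_forall_mem_ushift_iff_add_mem B U _ (Set.finite_Icc a b)
end

section
/- If A, B ⊆ ℕ and A is exactly embedded in B (for every finite interval I there exists x with x + (A ∩ I) = B ∩ (x + I)), then the Banach (upper uniform) density of A is at most the Banach density of B. In particular, BD(A - U) ≤ BD(A) for every ultrafilter U. -/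
/-- The maximal number of elements of `A` in an interval of length `n`. -/
noncomputable def maxCount (A : Set ℕ) (n : ℕ) : ℕ :=
  ⨆ k, (A ∩ Set.Icc (k + 1) (k + n)).ncard

/-- The Banach (upper uniform) density of `A ⊆ ℕ`. -/
noncomputable def banachDensity (A : Set ℕ) : ℝ :=
  ⨅ n : ℕ, (maxCount A (n + 1) : ℝ) / (n + 1)

/-!
Both inequalities come from one observation: if every finite window `A ∩ [a, b]` has a
translate inside `B`, then the count of `A` in each window is at most the count of `B` in the
translated window, so `maxCount A n ≤ maxCount B n` for all `n`. Exact embeddings give such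
translates directly. For `A - U`, the finitely many sets `A - s` with `s` in a window of `A - U`
all belong to `U`, so they have a common element `t`, and the window translated by `t` lies in
`A`.
-/

lemma ncard_inter_Icc_le (B : Set ℕ) (n j : ℕ) :
    (B ∩ Set.Icc (j + 1) (j + n)).ncard ≤ n := by
  calc (B ∩ Set.Icc (j + 1) (j + n)).ncard
      ≤ (Set.Icc (j + 1) (j + n)).ncard :=
        Set.ncard_le_ncard Set.inter_subset_right (Set.finite_Icc _ _)
    _ ≤ n := by rw [← Finset.coe_Icc, Set.ncard_coe_finset, Nat.card_Icc]; omega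

lemma ncard_le_maxCount (B : Set ℕ) (n k : ℕ) :
    (B ∩ Set.Icc (k + 1) (k + n)).ncard ≤ maxCount B n :=
  le_ciSup (f := fun k => (B ∩ Set.Icc (k + 1) (k + n)).ncard)
    ⟨n, by rintro _ ⟨j, rfl⟩; exact ncard_inter_Icc_le B n j⟩ k

lemma banachDensity_mono {A B : Set ℕ} (h : ∀ n, maxCount A n ≤ maxCount B n) :
    banachDensity A ≤ banachDensity B := by
  apply ciInf_mono
  · exact ⟨0, by rintro _ ⟨j, rfl⟩; positivity⟩
  · intro n
    gcongr
    exact_mod_cast h (n + 1)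

lemma maxCount_le_of_exists_add_mem {A B : Set ℕ}
    (h : ∀ a b : ℕ, ∃ x : ℕ, ∀ s ∈ A ∩ Set.Icc a b, x + s ∈ B) (n : ℕ) :
    maxCount A n ≤ maxCount B n := by
  refine ciSup_le fun k => ?_
  obtain ⟨x, hx⟩ := h (k + 1) (k + n)
  have hsub : (x + ·) '' (A ∩ Set.Icc (k + 1) (k + n)) ⊆
      B ∩ Set.Icc (x + k + 1) (x + k + n) := by
    rintro _ ⟨s, hs, rfl⟩
    refine ⟨hx s hs, ?_⟩
    have := hs.2
    simp only [Set.mem_Icc] at this ⊢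
    omega
  calc (A ∩ Set.Icc (k + 1) (k + n)).ncard
      = ((x + ·) '' (A ∩ Set.Icc (k + 1) (k + n))).ncard :=
        (Set.ncard_image_of_injective _ (add_right_injective x)).symm
    _ ≤ (B ∩ Set.Icc (x + k + 1) (x + k + n)).ncard :=
        Set.ncard_le_ncard hsub ((Set.finite_Icc _ _).inter_of_right _)
    _ ≤ maxCount B n := ncard_le_maxCount B n (x + k)

lemma banachDensity_le_of_exists_add_mem {A B : Set ℕ}
    (h : ∀ a b : ℕ, ∃ x : ℕ, ∀ s ∈ A ∩ Set.Icc a b, x + s ∈ B) :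
    banachDensity A ≤ banachDensity B :=
  banachDensity_mono (maxCount_le_of_exists_add_mem h)

lemma exists_add_mem_of_subset_ushift {A S : Set ℕ} {U : Ultrafilter ℕ}
    (hS : S.Finite) (hSU : S ⊆ ushift A U) : ∃ t : ℕ, ∀ s ∈ S, t + s ∈ A := by
  have hmem : (⋂ s ∈ S, lshift A s) ∈ U := (Filter.biInter_mem hS).mpr hSU
  obtain ⟨t, ht⟩ := Filter.nonempty_of_mem hmem
  exact ⟨t, fun s hs => Set.mem_iInter₂.mp ht s hs⟩

theorem stmt_14 (A B : Set ℕ)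
    (h : ∀ a b : ℕ, ∃ x : ℕ,
        (fun s => x + s) '' (A ∩ Set.Icc a b) = B ∩ ((fun s => x + s) '' Set.Icc a b)) :
    banachDensity A ≤ banachDensity B ∧
    ∀ U : Ultrafilter ℕ, banachDensity (ushift A U) ≤ banachDensity A := by
  refine ⟨banachDensity_le_of_exists_add_mem fun a b => ?_, fun U => ?_⟩
  · obtain ⟨x, hx⟩ := h a b
    exact ⟨x, fun s hs => (hx.le (Set.mem_image_of_mem _ hs)).1⟩
  · refine banachDensity_le_of_exists_add_mem fun a b => ?_
    exact exists_add_mem_of_subset_ushift ((Set.finite_Icc a b).inter_of_right _)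
      Set.inter_subset_left
end

section
/- For every A ⊆ ℕ there exists an ultrafilter U on ℕ such that the Schnirelmann density of the ultrafilter-shift A - U equals the Banach density of A: σ(A - U) = BD(A). -/
/-- The Schnirelmann density of `S ⊆ ℕ`. -/
noncomputable def schnirelmannDensity' (S : Set ℕ) : ℝ :=
  ⨅ n : ℕ, ((S ∩ Set.Icc 1 (n + 1)).ncard : ℝ) / (n + 1)

/-! If no start `m` had all prefixes of length `≤ N` of its window at least `BD(A)`-dense up to
an error `ε`, then cutting an arbitrary window of length `k` greedily into deficient prefixes would
show that it holds at most `k · BD(A) + N - ε ⌊k / N⌋` elements of `A`, contradicting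
`maxCount A k ≥ k · BD(A)` for large `k`. So the sets of such "almost dense" starts, with
`ε = 1 / (N + 1)`, form a decreasing sequence of nonempty sets and some ultrafilter `U` contains
them all. On `[1, n]` the set `A - U` agrees with `A - m` for `U`-many `m`, in particular for an
almost dense start `m`, so `|(A - U) ∩ [1, n]|` is the count of a window of length `n` that is
almost `BD(A)`-dense: this gives `σ(A - U) ≥ BD(A)`, and `σ(A - U) ≤ BD(A)` holds for any
`U`. -/

open Set Filter Topology

noncomputable def windowCount (A : Set ℕ) (a n : ℕ) : ℕ := (A ∩ Icc (a + 1) (a + n)).ncard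

@[simp]
lemma windowCount_zero (A : Set ℕ) (a : ℕ) : windowCount A a 0 = 0 := by
  simp [windowCount]

lemma windowCount_le (A : Set ℕ) (a n : ℕ) : windowCount A a n ≤ n :=
  (ncard_le_ncard inter_subset_right (finite_Icc _ _)).trans (by simp)

lemma windowCount_add (A : Set ℕ) (a n k : ℕ) :
    windowCount A a (n + k) = windowCount A a n + windowCount A (a + n) k := by
  have hsplit :
      Icc (a + 1) (a + (n + k)) = Icc (a + 1) (a + n) ∪ Icc (a + n + 1) (a + n + k) := by
    ext x; simp only [mem_union, mem_Icc]; omega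
  have hdisj : Disjoint (Icc (a + 1) (a + n)) (Icc (a + n + 1) (a + n + k)) :=
    Set.disjoint_left.2 fun x hx hy => by simp only [mem_Icc] at hx hy; omega
  rw [windowCount, hsplit, inter_union_distrib_left]
  exact ncard_union_eq (hdisj.mono inter_subset_right inter_subset_right)
    ((finite_Icc _ _).inter_of_right _) ((finite_Icc _ _).inter_of_right _)

lemma ncard_lshift_inter_Icc (A : Set ℕ) (m n : ℕ) :
    (lshift A m ∩ Icc 1 n).ncard = windowCount A m n := by
  have himage : (m + ·) '' (lshift A m ∩ Icc 1 n) = A ∩ Icc (m + 1) (m + n) := by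
    ext x
    simp only [mem_image, mem_inter_iff, lshift, mem_Icc]
    constructor
    · rintro ⟨j, ⟨hj, hj1, hjn⟩, rfl⟩
      exact ⟨by rwa [add_comm], by omega, by omega⟩
    · rintro ⟨hx, hx1, hxn⟩
      refine ⟨x - m, ⟨?_, by omega, by omega⟩, by omega⟩
      show x - m + m ∈ A
      rwa [Nat.sub_add_cancel (by omega)]
  rw [windowCount, ← himage, ncard_image_of_injective _ (add_right_injective m)]

lemma bddAbove_range_windowCount (A : Set ℕ) (n : ℕ) : BddAbove (range (windowCount A · n)) :=
  ⟨n, by rintro _ ⟨a, rfl⟩; exact windowCount_le A a n⟩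

lemma windowCount_le_maxCount (A : Set ℕ) (a n : ℕ) : windowCount A a n ≤ maxCount A n :=
  le_ciSup (bddAbove_range_windowCount A n) a

lemma exists_windowCount_eq_maxCount (A : Set ℕ) (n : ℕ) :
    ∃ a, windowCount A a n = maxCount A n :=
  Nat.sSup_mem (range_nonempty _) (bddAbove_range_windowCount A n)

lemma eventually_lshift_inter_eq_ushift_inter (A : Set ℕ) (U : Ultrafilter ℕ) {S : Set ℕ}
    (hS : S.Finite) : ∀ᶠ m in (U : Filter ℕ), lshift A m ∩ S = ushift A U ∩ S := by
  have hpoint : ∀ j, ∀ᶠ m in (U : Filter ℕ), (j ∈ lshift A m ↔ j ∈ ushift A U) := by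
    intro j
    by_cases hj : lshift A j ∈ U
    · filter_upwards [hj] with m hm
      simp_all [lshift, ushift, add_comm]
    · filter_upwards [Ultrafilter.compl_mem_iff_notMem.2 hj] with m hm
      simp_all [lshift, ushift, add_comm]
  filter_upwards [(eventually_all_finite hS).2 fun j _ => hpoint j] with m hm
  ext j
  simp only [mem_inter_iff]
  exact ⟨fun h => ⟨(hm j h.2).1 h.1, h.2⟩, fun h => ⟨(hm j h.2).2 h.1, h.2⟩⟩

lemma exists_mem_ncard_ushift_inter_Icc (A : Set ℕ) (U : Ultrafilter ℕ) {T : Set ℕ}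
    (hT : T ∈ U) (n : ℕ) : ∃ m ∈ T, (ushift A U ∩ Icc 1 n).ncard = windowCount A m n := by
  obtain ⟨m, hm, hmT⟩ :=
    ((eventually_lshift_inter_eq_ushift_inter A U (finite_Icc 1 n)).and hT).exists
  exact ⟨m, hmT, by rw [← hm, ncard_lshift_inter_Icc]⟩

lemma ncard_ushift_inter_Icc_le_maxCount (A : Set ℕ) (U : Ultrafilter ℕ) (n : ℕ) :
    (ushift A U ∩ Icc 1 n).ncard ≤ maxCount A n := by
  obtain ⟨m, -, hm⟩ := exists_mem_ncard_ushift_inter_Icc A U univ_mem n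
  exact hm ▸ windowCount_le_maxCount A m n

lemma bddBelow_range_banachDensity (A : Set ℕ) :
    BddBelow (range fun n : ℕ => (maxCount A (n + 1) : ℝ) / (n + 1)) :=
  ⟨0, by rintro _ ⟨n, rfl⟩; positivity⟩

lemma banachDensity_nonneg (A : Set ℕ) : 0 ≤ banachDensity A :=
  le_ciInf fun _ => by positivity

lemma natCast_mul_banachDensity_le_maxCount (A : Set ℕ) (n : ℕ) :
    n * banachDensity A ≤ maxCount A n := by
  cases n with
  | zero => simp
  | succ n =>
    have h := ciInf_le (bddBelow_range_banachDensity A) n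
    rw [← banachDensity, le_div_iff₀ (by positivity)] at h
    push_cast
    linarith

lemma ne_zero_of_windowCount_add_lt {A : Set ℕ} {a n : ℕ} {d ε : ℝ} (hε : 0 < ε)
    (h : windowCount A a n + ε < n * d) : n ≠ 0 := by
  rintro rfl
  simp only [windowCount_zero, Nat.cast_zero, zero_mul, zero_add] at h
  linarith

/-- Peel deficient prefixes off the window greedily; the last piece, shorter than `N`, costs at
most `N`. -/
lemma windowCount_add_mul_div_le {A : Set ℕ} {d ε : ℝ} {N : ℕ} (hd : 0 ≤ d) (hε : 0 < ε)
    (hdeficit : ∀ m, ∃ n ≤ N, windowCount A m n + ε < n * d) (k a : ℕ) :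
    windowCount A a k + ε * (k / N : ℕ) ≤ k * d + N := by
  induction k using Nat.strong_induction_on generalizing a with
  | _ k ih =>
  rcases lt_or_ge k N with hk | hk
  · have hW : (windowCount A a k : ℝ) ≤ k := by exact_mod_cast windowCount_le A a k
    have hkN : (k : ℝ) ≤ N := by exact_mod_cast hk.le
    rw [Nat.div_eq_of_lt hk, Nat.cast_zero, mul_zero, add_zero]
    nlinarith
  · obtain ⟨n, hnN, hn⟩ := hdeficit a
    have hn0 := ne_zero_of_windowCount_add_lt hε hn
    obtain ⟨r, rfl⟩ := Nat.exists_eq_add_of_le (hnN.trans hk)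
    have hdiv : (n + r) / N ≤ r / N + 1 := by
      rw [← Nat.add_div_right r (by omega)]
      exact Nat.div_le_div_right (by omega)
    have hdivR : (((n + r) / N : ℕ) : ℝ) ≤ ((r / N : ℕ) : ℝ) + 1 := by exact_mod_cast hdiv
    have ihr := ih r (by omega) (a + n)
    rw [windowCount_add]
    push_cast at ihr ⊢
    nlinarith

lemma exists_forall_natCast_mul_banachDensity_le (A : Set ℕ) (N : ℕ) {ε : ℝ} (hε : 0 < ε) :
    ∃ m, ∀ n ≤ N, n * banachDensity A ≤ windowCount A m n + ε := by
  by_contra! hdeficit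
  have hN : 0 < N := by
    obtain ⟨n, hnN, hn⟩ := hdeficit 0
    have := ne_zero_of_windowCount_add_lt hε hn
    omega
  obtain ⟨M, hM⟩ := exists_nat_gt (N / ε)
  obtain ⟨a, ha⟩ := exists_windowCount_eq_maxCount A (N * M)
  have hbound := windowCount_add_mul_div_le (banachDensity_nonneg A) hε hdeficit (N * M) a
  rw [Nat.mul_div_cancel_left M hN, ha] at hbound
  have hmax := natCast_mul_banachDensity_le_maxCount A (N * M)
  rw [div_lt_iff₀ hε] at hM
  linarith

def almostDenseStarts (A : Set ℕ) (N : ℕ) : Set ℕ :=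
  {m | ∀ n ≤ N, n * banachDensity A ≤ windowCount A m n + 1 / (N + 1)}

lemma almostDenseStarts_antitone (A : Set ℕ) : Antitone (almostDenseStarts A) := by
  intro N N' hNN' m hm n hn
  calc n * banachDensity A ≤ windowCount A m n + 1 / (N' + 1) := hm n (hn.trans hNN')
    _ ≤ windowCount A m n + 1 / (N + 1) := by gcongr

lemma almostDenseStarts_nonempty (A : Set ℕ) (N : ℕ) : (almostDenseStarts A N).Nonempty :=
  exists_forall_natCast_mul_banachDensity_le A N Nat.one_div_pos_of_nat

lemma Ultrafilter.exists_forall_mem_of_antitone {α : Type*} {E : ℕ → Set α} (hE : Antitone E)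
    (hne : ∀ N, (E N).Nonempty) : ∃ U : Ultrafilter α, ∀ N, E N ∈ U := by
  have : (⨅ N, 𝓟 (E N)).NeBot :=
    iInf_neBot_of_directed' (directed_of_isDirected_le fun _ _ h => principal_mono.2 (hE h))
      fun N => principal_neBot_iff.2 (hne N)
  exact ⟨.of (⨅ N, 𝓟 (E N)),
    fun N => Ultrafilter.of_le _ (mem_iInf_of_mem N (mem_principal_self _))⟩

lemma natCast_mul_banachDensity_le_ncard_ushift_inter_Icc (A : Set ℕ) {U : Ultrafilter ℕ}
    (hU : ∀ N, almostDenseStarts A N ∈ U) (n : ℕ) :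
    n * banachDensity A ≤ (ushift A U ∩ Icc 1 n).ncard := by
  have hlim : Tendsto (fun N : ℕ => ((ushift A U ∩ Icc 1 n).ncard : ℝ) + 1 / (N + 1)) atTop
      (𝓝 (ushift A U ∩ Icc 1 n).ncard) := by
    simpa using tendsto_const_nhds.add (tendsto_one_div_add_atTop_nhds_zero_nat (𝕜 := ℝ))
  refine ge_of_tendsto hlim ?_
  filter_upwards [eventually_ge_atTop n] with N hN
  obtain ⟨m, hm, hcount⟩ := exists_mem_ncard_ushift_inter_Icc A U (hU N) n
  rw [hcount]
  exact hm n hN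

theorem stmt_15 (A : Set ℕ) :
    ∃ U : Ultrafilter ℕ, schnirelmannDensity' (ushift A U) = banachDensity A := by
  obtain ⟨U, hU⟩ := Ultrafilter.exists_forall_mem_of_antitone (almostDenseStarts_antitone A)
    (almostDenseStarts_nonempty A)
  refine ⟨U, le_antisymm (le_ciInf fun n => ?_) (le_ciInf fun n => ?_)⟩
  · calc schnirelmannDensity' (ushift A U)
        ≤ ((ushift A U ∩ Icc 1 (n + 1)).ncard : ℝ) / (n + 1) :=
          ciInf_le ⟨0, by rintro _ ⟨k, rfl⟩; positivity⟩ n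
      _ ≤ maxCount A (n + 1) / (n + 1) := by
          gcongr
          exact_mod_cast ncard_ushift_inter_Icc_le_maxCount A U (n + 1)
  · rw [le_div_iff₀ (by positivity), mul_comm]
    exact_mod_cast natCast_mul_banachDensity_le_ncard_ushift_inter_Icc A hU (n + 1)
end

section
/- For every nonprincipal ultrafilter U on ℕ there exists a nonprincipal ultrafilter V on ℕ such that U ⊕ V ≠ V ⊕ U. Hence the center of the semigroup (βℕ, ⊕) contains only principal ultrafilters. -/
/-!
Fix `C ∈ U` whose complement contains arbitrarily long intervals; one of the two classes of
`n ↦ Even (Nat.sqrt n)` works, since each contains the blocks `[k², (k + 1)²)` for infinitely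
many `k`. Choose `a₀ < a₁ < ⋯` growing so fast that for `k < j` the window
`[a_j - a_k, a_j - a_k + j]` avoids `C`, and let `A = ⋃ₖ [a_k, a_k + k]` and `V` be a
nonprincipal ultrafilter containing `{a_k}`. Every translate `A - n` contains `a_k` for `k ≥ n`,
so `A ∈ U ⊕ V`. But `A - a_k` misses every element of `C` above `k`, so it is not in `U`, and
hence `A ∉ V ⊕ U`.
-/

/-- The pseudo-sum of two ultrafilters on ℕ:
`A ∈ U ⊕ V ↔ {n | A - n ∈ V} ∈ U`, where `A - n = {m | m + n ∈ A}`. -/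
def psum (U V : Ultrafilter ℕ) : Ultrafilter ℕ :=
  U.bind (fun n => V.map (fun m => m + n))

open Filter Set

lemma mem_psum {U V : Ultrafilter ℕ} {A : Set ℕ} :
    A ∈ psum U V ↔ {n | (· + n) ⁻¹' A ∈ V} ∈ U :=
  Filter.mem_bind'

lemma psum_ne_psum_of_translate {U V : Ultrafilter ℕ} {A S : Set ℕ}
    (hV : ∀ n, (· + n) ⁻¹' A ∈ V) (hS : S ∈ V) (hU : ∀ n ∈ S, (· + n) ⁻¹' A ∉ U) :
    psum U V ≠ psum V U := by
  intro h
  have hA : A ∈ psum U V := mem_psum.2 (univ_mem' hV)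
  rw [h, mem_psum] at hA
  obtain ⟨n, hnA, hnS⟩ := Filter.nonempty_of_mem (inter_mem hA hS)
  exact hU n hnS hnA

lemma Ultrafilter.map_hyperfilter_ne_pure {α β : Type*} [Infinite α] {f : α → β}
    (hf : Function.Injective f) (b : β) : map f (hyperfilter α) ≠ pure b := by
  intro h
  have hb : {b} ∈ map f (hyperfilter α) := h ▸ mem_pure.2 rfl
  exact notMem_hyperfilter_of_finite ((finite_singleton b).preimage hf.injOn) (mem_map.1 hb)

def IsThick (T : Set ℕ) : Prop :=
  ∀ L, ∃ x, L ≤ x ∧ Icc x (x + L) ⊆ T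

lemma isThick_setOf_sqrt {P : ℕ → Prop} (hP : ∃ᶠ k in atTop, P k) :
    IsThick {n | P (Nat.sqrt n)} := by
  intro L
  obtain ⟨k, hLk, hk⟩ := frequently_atTop.1 hP L
  refine ⟨k * k, hLk.trans (Nat.le_mul_self k), fun m ⟨hm₁, hm₂⟩ => ?_⟩
  obtain ⟨d, rfl⟩ := Nat.exists_eq_add_of_le hm₁
  simpa [Nat.sqrt_add_eq k (show d ≤ k + k by omega)] using hk

lemma exists_mem_isThick_compl (U : Ultrafilter ℕ) : ∃ C ∈ U, IsThick Cᶜ := by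
  have hEven : ∃ᶠ k in atTop, Even k :=
    frequently_atTop.2 fun N => ⟨2 * N, by omega, even_two_mul N⟩
  have hOdd : ∃ᶠ k in atTop, ¬Even k :=
    frequently_atTop.2 fun N => ⟨2 * N + 1, by omega, by simp⟩
  by_cases h : {n | Even (Nat.sqrt n)} ∈ U
  · exact ⟨_, h, isThick_setOf_sqrt hOdd⟩
  · exact ⟨_, U.compl_mem_iff_notMem.2 h, by rw [compl_compl]; exact isThick_setOf_sqrt hEven⟩

lemma IsThick.exists_sparse_seq {T : Set ℕ} (hT : IsThick T) :
    ∃ a : ℕ → ℕ, (∀ j, a j + j < a (j + 1)) ∧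
      ∀ ⦃k j m⦄, k < j → a j ≤ m + a k → m + a k ≤ a j + j → m ∈ T := by
  choose g hgL hgT using hT
  let a : ℕ → ℕ := fun j => Nat.rec 0 (fun j aj => aj + g (aj + j + 1)) j
  have ha_succ (j : ℕ) : a (j + 1) = a j + g (a j + j + 1) := rfl
  have hgap (j : ℕ) : a j + j < a (j + 1) := by have := hgL (a j + j + 1); rw [ha_succ]; omega
  have ha_mono : Monotone a := monotone_nat_of_le_succ fun j => by have := hgap j; omega
  refine ⟨a, hgap, fun k j m hkj h₁ h₂ => ?_⟩
  obtain ⟨i, rfl⟩ : ∃ i, j = i + 1 := ⟨j - 1, by omega⟩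
  have hki := ha_mono (Nat.le_of_lt_succ hkj)
  rw [ha_succ] at h₁ h₂
  exact hgT (a i + i + 1) ⟨by omega, by omega⟩

lemma exists_psum_ne_psum_of_isThick_compl {U : Ultrafilter ℕ} (hU : (U : Filter ℕ) ≤ cofinite)
    {C : Set ℕ} (hC : C ∈ U) (hT : IsThick Cᶜ) :
    ∃ V : Ultrafilter ℕ, (∀ n, V ≠ pure n) ∧ psum U V ≠ psum V U := by
  obtain ⟨a, hgap, hwin⟩ := hT.exists_sparse_seq
  have ha_inj : Function.Injective a :=
    (strictMono_nat_of_lt_succ fun j => by have := hgap j; omega).injective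
  have hend_mono : Monotone fun j => a j + j :=
    monotone_nat_of_le_succ fun j => by have := hgap j; omega
  refine ⟨.map a (hyperfilter ℕ), Ultrafilter.map_hyperfilter_ne_pure ha_inj,
    psum_ne_psum_of_translate (A := ⋃ k, Icc (a k) (a k + k)) (S := range a) ?_ ?_ ?_⟩
  · intro n
    rw [Ultrafilter.mem_map]
    filter_upwards [Nat.hyperfilter_le_atTop (eventually_ge_atTop n)] with k hk
    exact mem_iUnion.2 ⟨k, by simp only [mem_Icc]; omega⟩
  · exact Ultrafilter.mem_map.2 (univ_mem' mem_range_self)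
  · rintro _ ⟨k, rfl⟩ hk
    have hCk : C ∩ Ioi k ∈ U :=
      inter_mem hC ((Nat.cofinite_eq_atTop ▸ hU) (Ioi_mem_atTop k))
    obtain ⟨m, ⟨hmC, hmk⟩, hmA⟩ := Filter.nonempty_of_mem (inter_mem hCk hk)
    obtain ⟨j, h₁, h₂⟩ : ∃ j, a j ≤ m + a k ∧ m + a k ≤ a j + j := by simpa using hmA
    rcases le_or_gt j k with hjk | hkj
    · have : a j + j ≤ a k + k := hend_mono hjk
      simp only [mem_Ioi] at hmk
      omega
    · exact hwin hkj h₁ h₂ hmC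

theorem stmt_16 (U : Ultrafilter ℕ) (hU : ∀ n, U ≠ pure n) :
    ∃ V : Ultrafilter ℕ, (∀ n, V ≠ pure n) ∧ psum U V ≠ psum V U := by
  have hU_cofinite : (U : Filter ℕ) ≤ cofinite :=
    U.le_cofinite_or_eq_pure.resolve_right fun ⟨n, hn⟩ => hU n hn
  obtain ⟨C, hC, hT⟩ := exists_mem_isThick_compl U
  exact exists_psum_ne_psum_of_isThick_compl hU_cofinite hC hT
end

section
/- There is no ultrafilter U on ℕ satisfying U ⋆ U = U, where A ∈ U ⋆ V ↔ {n | A + n ∈ V} ∈ U and A + n = {a + n | a ∈ A}. -/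
/-!
If `A ∈ U → {n | A + n ∈ U} ∈ U`, then `U` contains every set `{m | N ∣ m}`: the residue class
mod `N` that lies in `U` contains two elements together with their sum, so it is the class of `0`.
If `U ≠ pure 0`, it concentrates on nonzero numbers whose last nonzero ternary digit
`ordCompl[3] n % 3` is a fixed `r`. Taking `n` in that set `C` with `C + n ∈ U`, and then `a ∈ C` with
`3 ^ (v₃ n + 1) ∣ a + n`, forces `v₃ a = v₃ n` and `r + r ≡ 0 [MOD 3]`, which is impossible.
-/

open Filter

theorem Nat.not_pow_succ_dvd_pow_mul_add_pow_mul {p j k b c : ℕ} (hp : p.Prime) (hp2 : p ≠ 2)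
    (hb : ¬ p ∣ b) (hc : ¬ p ∣ c) (hbc : c ≡ b [MOD p]) : ¬ p ^ (k + 1) ∣ p ^ j * c + p ^ k * b := by
  intro hdvd
  rcases lt_trichotomy j k with hjk | rfl | hkj
  · have hb' : p ^ (j + 1) ∣ p ^ k * b := (pow_dvd_pow p hjk).mul_right b
    have hc' : p ^ j * p ∣ p ^ j * c :=
      (Nat.dvd_add_left hb').mp ((pow_dvd_pow p (by omega)).trans hdvd)
    exact hc ((Nat.mul_dvd_mul_iff_left (pow_pos hp.pos _)).mp hc')
  · have hsum : p ^ j * p ∣ p ^ j * (c + b) := by rw [mul_add]; exact hdvd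
    have hcb : p ∣ c + b := (Nat.mul_dvd_mul_iff_left (pow_pos hp.pos _)).mp hsum
    have h2b : p ∣ 2 * b := by
      rw [two_mul]; exact ((Nat.ModEq.add_right b hbc).dvd_iff dvd_rfl).mp hcb
    rcases (Nat.Prime.dvd_mul hp).mp h2b with h2 | h2
    · exact hp2 ((Nat.prime_dvd_prime_iff_eq hp Nat.prime_two).mp h2)
    · exact hb h2
  · have hc' : p ^ (k + 1) ∣ p ^ j * c := (pow_dvd_pow p hkj).mul_right c
    have hb' : p ^ k * p ∣ p ^ k * b := (Nat.dvd_add_right hc').mp hdvd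
    exact hb ((Nat.mul_dvd_mul_iff_left (pow_pos hp.pos _)).mp hb')

namespace Ultrafilter

variable {U : Ultrafilter ℕ}

theorem exists_add_mem_of_shift (hU : ∀ A ∈ U, {n | (· + n) '' A ∈ U} ∈ U) {A : Set ℕ}
    {B : ℕ → Set ℕ} (hA : A ∈ U) (hB : ∀ n, B n ∈ U) : ∃ a ∈ A, ∃ n ∈ A, a + n ∈ B n := by
  obtain ⟨n, hnA, hn⟩ := U.nonempty_of_mem (inter_mem hA (hU A hA))
  obtain ⟨_, ⟨a, haA, rfl⟩, hm⟩ := U.nonempty_of_mem (inter_mem hn (hB n))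
  exact ⟨a, haA, n, hnA, hm⟩

theorem setOf_dvd_mem_of_shift (hU : ∀ A ∈ U, {n | (· + n) '' A ∈ U} ∈ U) {N : ℕ} (hN : N ≠ 0) :
    {m | N ∣ m} ∈ U := by
  obtain ⟨r, -, hr⟩ := (eventually_exists_mem_iff (P := fun r m => m % N = r)
    (Set.finite_Iio N)).mp
    (Eventually.of_forall fun m => ⟨m % N, Nat.mod_lt m (Nat.pos_of_ne_zero hN), rfl⟩)
  obtain ⟨a, ha, n, hn, han⟩ := exists_add_mem_of_shift hU hr fun _ => hr
  have hn0 : n ≡ 0 [MOD N] := Nat.ModEq.add_left_cancel' a (han.trans ha.symm)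
  filter_upwards [hr] with m hm
  exact Nat.dvd_of_mod_eq_zero (hm.trans (hn.symm.trans hn0))

theorem eq_pure_zero_of_shift (hU : ∀ A ∈ U, {n | (· + n) '' A ∈ U} ∈ U) : U = pure 0 := by
  by_contra hU0
  have hne : {n : ℕ | n ≠ 0} ∈ U := U.compl_mem_iff_notMem.mpr fun h0 => by
    obtain ⟨_, rfl, hpure⟩ := U.eq_pure_of_finite_mem (Set.finite_singleton 0) h0
    exact hU0 hpure
  obtain ⟨r, -, hr⟩ := (eventually_exists_mem_iff (P := fun r n => ordCompl[3] n % 3 = r)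
    (Set.finite_Iio 3)).mp (Eventually.of_forall fun n => ⟨_, Nat.mod_lt _ three_pos, rfl⟩)
  obtain ⟨a, ⟨ha0, har⟩, n, ⟨hn0, hnr⟩, hdvd⟩ := exists_add_mem_of_shift hU (inter_mem hne hr)
    fun n => setOf_dvd_mem_of_shift hU (pow_ne_zero (n.factorization 3 + 1) three_ne_zero)
  refine Nat.not_pow_succ_dvd_pow_mul_add_pow_mul (j := a.factorization 3)
    (k := n.factorization 3) Nat.prime_three (by norm_num) (Nat.not_dvd_ordCompl Nat.prime_three hn0)
    (Nat.not_dvd_ordCompl Nat.prime_three ha0) (har.trans hnr.symm) ?_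
  rwa [Nat.ordProj_mul_ordCompl_eq_self, Nat.ordProj_mul_ordCompl_eq_self]

end Ultrafilter

theorem stmt_19 :
    ¬ ∃ U : Ultrafilter ℕ, (∀ k, U ≠ pure k) ∧
      ∀ A : Set ℕ, A ∈ U ↔ {n | ((fun a => a + n) '' A) ∈ U} ∈ U := by
  rintro ⟨U, hfree, hU⟩
  exact hfree 0 (Ultrafilter.eq_pure_zero_of_shift fun A hA => (hU A).mp hA)
end
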